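/- arXiv:2005.09680 — 3 statements merged into one kernel-verified Lean document; each statement's English description precedes it below -/
import Mathlib

section
/- Let N_p = ⟨a^q⟩ ≤ N_{pq²}, a normal subgroup of order p. Then: (1) N_{pq²}/N_p is a q-group and every normal subgroup of N_{pq²} with q-group quotient contains N_p, i.e. O^q(N_{pq²}) = N_p; (2) the only normal subgroup of N_{pq²} whose quotient is a p-group is N_{pq²} itself, i.e. O^p(N_{pq²}) = N_{pq²}. Consequently, every large subgroup of N_{pq²} contains N_p. -/
open Multiplicative

namespace Mizerka

/-- The standing hypotheses: `p` and `q` are odd primes with `q ∣ p - 1`, and `i` is a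
natural number with `i ≡ 1 (mod q)` whose multiplicative order modulo `p` equals `q`. -/
structure Hyp (p q i : ℕ) : Prop where
  hp : Nat.Prime p
  hq : Nat.Prime q
  hoddp : Odd p
  hoddq : Odd q
  hdvd : q ∣ p - 1
  hmod : i ≡ 1 [MOD q]
  hord : orderOf (i : ZMod p) = q

namespace Hyp

variable {p q i : ℕ}

theorem coprime_q (h : Hyp p q i) : Nat.Coprime i q := by
  have h1 : i % q = 1 % q := h.hmod
  unfold Nat.Coprime
  rw [Nat.gcd_comm, Nat.gcd_rec, h1, ← Nat.gcd_rec, Nat.gcd_one_right]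

theorem coprime_p (h : Hyp p q i) : Nat.Coprime i p := by
  haveI : NeZero p := ⟨h.hp.ne_zero⟩
  have hq1 : q - 1 + 1 = q := Nat.succ_pred_eq_of_pos h.hq.pos
  have hmul : (i : ZMod p) * (i : ZMod p) ^ (q - 1) = 1 := by
    rw [← pow_succ', hq1, ← h.hord, pow_orderOf_eq_one]
  exact (ZMod.isUnit_iff_coprime i p).mp (IsUnit.of_mul_eq_one _ hmul)

theorem coprime (h : Hyp p q i) : Nat.Coprime i (p * q) :=
  Nat.Coprime.mul_right h.coprime_p h.coprime_q

theorem pow_q_modeq (h : Hyp p q i) : i ^ q ≡ 1 [MOD p * q] := by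
  have hpq : p ≠ q := by
    have h1 : 0 < p - 1 := by have := h.hp.two_le; omega
    have := Nat.le_of_dvd h1 h.hdvd
    omega
  have hc : Nat.Coprime p q := (Nat.coprime_primes h.hp h.hq).mpr hpq
  rw [← Nat.modEq_and_modEq_iff_modEq_mul hc]
  constructor
  · haveI : NeZero p := ⟨h.hp.ne_zero⟩
    have hcast : ((i ^ q : ℕ) : ZMod p) = ((1 : ℕ) : ZMod p) := by
      push_cast
      rw [← h.hord, pow_orderOf_eq_one]
    exact (ZMod.natCast_eq_natCast_iff _ _ _).mp hcast
  · calc i ^ q ≡ 1 ^ q [MOD q] := h.hmod.pow q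
      _ = 1 := one_pow q

/-- The unit of `ZMod (p*q)` determined by `i`. -/
def unit (h : Hyp p q i) : (ZMod (p * q))ˣ := ZMod.unitOfCoprime i h.coprime

/-- The unit of `ZMod p` determined by `i`. -/
def unitP (h : Hyp p q i) : (ZMod p)ˣ := ZMod.unitOfCoprime i h.coprime_p

theorem unit_pow (h : Hyp p q i) : h.unit ^ q = 1 := by
  apply Units.ext
  have h2 : ((i ^ q : ℕ) : ZMod (p * q)) = ((1 : ℕ) : ZMod (p * q)) :=
    (ZMod.natCast_eq_natCast_iff _ _ _).mpr h.pow_q_modeq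
  push_cast at h2
  simpa [Hyp.unit] using h2

theorem unitP_pow (h : Hyp p q i) : h.unitP ^ q = 1 := by
  apply Units.ext
  have h2 : (i : ZMod p) ^ q = 1 := by rw [← h.hord]; exact pow_orderOf_eq_one _
  simpa [Hyp.unitP] using h2

end Hyp

/-- Multiplication by a unit, as an automorphism of the (multiplicatively written)
cyclic group `ZMod n`. -/
def zmodMulAut (n : ℕ) : (ZMod n)ˣ →* MulAut (Multiplicative (ZMod n)) where
  toFun u :=
    { toFun := fun x => ofAdd ((u : ZMod n) * x.toAdd)
      invFun := fun x => ofAdd (((u⁻¹ : (ZMod n)ˣ) : ZMod n) * x.toAdd)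
      left_inv := fun x => by simp
      right_inv := fun x => by simp
      map_mul' := fun x y => by simp [mul_add, ← ofAdd_add] }
  map_one' := by ext x; simp
  map_mul' u v := by ext x; simp [mul_assoc]

/-- The function underlying the automorphism of the dihedral group induced by
multiplication by a unit on the rotation part. -/
def dihedralAutFun (n : ℕ) (u : (ZMod n)ˣ) : DihedralGroup n → DihedralGroup n
  | .r j => .r ((u : ZMod n) * j)
  | .sr j => .sr ((u : ZMod n) * j)

/-- Multiplication of indices by a unit, as an automorphism of the dihedral group:
`a ↦ a^u`, `b ↦ b`. -/
def dihedralAut (n : ℕ) : (ZMod n)ˣ →* MulAut (DihedralGroup n) where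
  toFun u :=
    { toFun := dihedralAutFun n u
      invFun := dihedralAutFun n u⁻¹
      left_inv := fun x => by cases x <;> simp [dihedralAutFun]
      right_inv := fun x => by cases x <;> simp [dihedralAutFun]
      map_mul' := fun x y => by cases x <;> cases y <;> simp [dihedralAutFun, mul_add, mul_sub] }
  map_one' := by ext x; cases x <;> simp [dihedralAutFun]
  map_mul' u v := by ext x; cases x <;> simp [dihedralAutFun, mul_assoc]

/-- The homomorphism `ZMod q →* G` (written multiplicatively) sending `1` to a fixed
element `g` with `g ^ q = 1`. -/
def zmodPow {G : Type*} [Group G] (q : ℕ) [NeZero q] (g : G) (hg : g ^ q = 1) :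
    Multiplicative (ZMod q) →* G where
  toFun x := g ^ (toAdd x).val
  map_one' := by
    show g ^ (toAdd (1 : Multiplicative (ZMod q))).val = 1
    rw [toAdd_one, ZMod.val_zero, pow_zero]
  map_mul' x y := by
    have key : ∀ m : ℕ, g ^ (m % q) = g ^ m := fun m => by
      conv_rhs => rw [← Nat.div_add_mod m q]
      rw [pow_add, pow_mul, hg, one_pow, one_mul]
    show g ^ (toAdd (x * y)).val = g ^ (toAdd x).val * g ^ (toAdd y).val
    rw [toAdd_mul, ZMod.val_add, key, pow_add]

namespace Hyp

variable {p q i : ℕ}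

/-- The action of `C_q` on `C_{pq}` sending the generator to multiplication by `i`. -/
def phiN (h : Hyp p q i) : Multiplicative (ZMod q) →* MulAut (Multiplicative (ZMod (p * q))) :=
  haveI : NeZero q := ⟨h.hq.ne_zero⟩
  zmodPow q (zmodMulAut (p * q) h.unit) (by rw [← map_pow, h.unit_pow, map_one])

/-- The action of `C_q` on `D_{2pq}` sending the generator to `τ` (`τ(a) = a^i`, `τ(b) = b`). -/
def phiG (h : Hyp p q i) : Multiplicative (ZMod q) →* MulAut (DihedralGroup (p * q)) :=
  haveI : NeZero q := ⟨h.hq.ne_zero⟩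
  zmodPow q (dihedralAut (p * q) h.unit) (by rw [← map_pow, h.unit_pow, map_one])

/-- The action of `C_q` on `C_p` sending the generator to multiplication by `i`. -/
def phiF (h : Hyp p q i) : Multiplicative (ZMod q) →* MulAut (Multiplicative (ZMod p)) :=
  haveI : NeZero q := ⟨h.hq.ne_zero⟩
  zmodPow q (zmodMulAut p h.unitP) (by rw [← map_pow, h.unitP_pow, map_one])

end Hyp

/-- The group `N_{pq²} = ⟨a, c ∣ a^{pq} = c^q = 1, c a c⁻¹ = a^i⟩ = C_{pq} ⋊ C_q`. -/
abbrev Npq2 {p q i : ℕ} (h : Hyp p q i) : Type :=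
  Multiplicative (ZMod (p * q)) ⋊[h.phiN] Multiplicative (ZMod q)

/-- The group `G_{p,q} = D_{2pq} ⋊_φ C_q`. -/
abbrev Gpq {p q i : ℕ} (h : Hyp p q i) : Type :=
  DihedralGroup (p * q) ⋊[h.phiG] Multiplicative (ZMod q)

/-- The Frobenius group `F_{p,q} = C_p ⋊ C_q` (the nonabelian group of order `pq`). -/
abbrev Fpq {p q i : ℕ} (h : Hyp p q i) : Type :=
  Multiplicative (ZMod p) ⋊[h.phiF] Multiplicative (ZMod q)

variable {p q i : ℕ}

/-- The generator `a` of `N_{pq²}`. -/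
def aN (h : Hyp p q i) : Npq2 h := SemidirectProduct.inl (ofAdd 1)

/-- The generator `c` of `N_{pq²}`. -/
def cN (h : Hyp p q i) : Npq2 h := SemidirectProduct.inr (ofAdd 1)

/-- The generator `a` of `G_{p,q}`. -/
def aG (h : Hyp p q i) : Gpq h := SemidirectProduct.inl (DihedralGroup.r 1)

/-- The generator `b` of `G_{p,q}`. -/
def bG (h : Hyp p q i) : Gpq h := SemidirectProduct.inl (DihedralGroup.sr 0)

/-- The generator `c` of `G_{p,q}`. -/
def cG (h : Hyp p q i) : Gpq h := SemidirectProduct.inr (ofAdd 1)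

/-- The real conjugacy class `(g)^± = (g) ∪ (g⁻¹)`. -/
def realClass {G : Type*} [Group G] (g : G) : Set G := {x | IsConj g x ∨ IsConj g⁻¹ x}

/-- `N` is a normal subgroup whose quotient is an `ℓ`-group (the quotient has `ℓ`-power order,
i.e. `N` has `ℓ`-power index). -/
def OQuot {G : Type*} [Group G] (ℓ : ℕ) (N : Subgroup G) : Prop :=
  N.Normal ∧ ∃ k : ℕ, N.index = ℓ ^ k

/-- `H` is a large subgroup of `G`: it contains `O^ℓ(G)`, the smallest normal subgroup
with `ℓ`-group quotient, for some prime `ℓ`. -/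
def IsLarge {G : Type*} [Group G] (H : Subgroup G) : Prop :=
  ∃ ℓ : ℕ, Nat.Prime ℓ ∧
    ∃ N : Subgroup G, OQuot ℓ N ∧ (∀ M : Subgroup G, OQuot ℓ M → N ≤ M) ∧ N ≤ H

section Reps

variable {k : Type*} [CommSemiring k] {G : Type*} [Group G]

/-- The subspace `V^H` of `H`-fixed vectors of a representation. -/
def fixedPts {V : Type*} [AddCommMonoid V] [Module k V]
    (ρ : Representation k G V) (H : Subgroup G) : Submodule k V where
  carrier := {v | ∀ g ∈ H, ρ g v = v}
  add_mem' := by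
    intro a b ha hb g hg
    rw [map_add, ha g hg, hb g hg]
  zero_mem' := by
    intro g hg
    rw [map_zero]
  smul_mem' := by
    intro c v hv g hg
    rw [map_smul, hv g hg]

end Reps

/-- The weak gap condition for a real representation: `dim V^P ≥ 2 dim V^H` for all
`P < H ≤ G` with `P` of prime power order. -/
def WeakGap {G : Type*} [Group G] {V : Type*} [AddCommGroup V] [Module ℝ V]
    (ρ : Representation ℝ G V) : Prop :=
  ∀ P H : Subgroup G, P < H → (∃ ℓ k : ℕ, Nat.Prime ℓ ∧ Nat.card P = ℓ ^ k) →
    2 * Module.finrank ℝ (fixedPts ρ H) ≤ Module.finrank ℝ (fixedPts ρ P)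

/-- Isomorphism of real representations: an equivariant linear equivalence. -/
def RepIso {G : Type*} [Group G] {U V : Type*} [AddCommGroup U] [Module ℝ U]
    [AddCommGroup V] [Module ℝ V]
    (ρU : Representation ℝ G U) (ρV : Representation ℝ G V) : Prop :=
  ∃ e : U ≃ₗ[ℝ] V, ∀ (g : G) (u : U), e (ρU g u) = ρV g (e u)

/-- Two real representations are `𝒫`-matched if their restrictions to every subgroup of
prime power order are isomorphic. -/
def PMatched {G : Type*} [Group G] {U V : Type*} [AddCommGroup U] [Module ℝ U]
    [AddCommGroup V] [Module ℝ V]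
    (ρU : Representation ℝ G U) (ρV : Representation ℝ G V) : Prop :=
  ∀ P : Subgroup G, (∃ ℓ k : ℕ, Nat.Prime ℓ ∧ Nat.card P = ℓ ^ k) →
    RepIso (ρU.comp P.subtype) (ρV.comp P.subtype)

/-- A bundled finite-dimensional-free real representation of `G`. -/
structure RealRep (G : Type*) [Group G] where
  carrier : Type
  [acg : AddCommGroup carrier]
  [mod : Module ℝ carrier]
  rho : Representation ℝ G carrier

attribute [instance] RealRep.acg RealRep.mod

theorem dihedralAut_pow_r (n : ℕ) (u : (ZMod n)ˣ) (k : ℕ) (m : ZMod n) :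
    ((dihedralAut n u) ^ k) (DihedralGroup.r m)
      = DihedralGroup.r (((u ^ k : (ZMod n)ˣ) : ZMod n) * m) := by
  induction k generalizing m with
  | zero => simp
  | succ k ih =>
    rw [pow_succ, MulAut.mul_apply]
    have h1 : (dihedralAut n u) (DihedralGroup.r m) = DihedralGroup.r ((u : ZMod n) * m) := rfl
    rw [h1, ih, pow_succ, Units.val_mul, mul_assoc]

theorem Hyp.phiG_r (h : Hyp p q i) (z : Multiplicative (ZMod q)) (m : ZMod (p * q)) :
    h.phiG z (DihedralGroup.r m)
      = DihedralGroup.r (((h.unit ^ (toAdd z).val : (ZMod (p * q))ˣ) : ZMod (p * q)) * m) := by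
  have h1 : h.phiG z = (dihedralAut (p * q) h.unit) ^ (toAdd z).val := rfl
  rw [h1, dihedralAut_pow_r]

theorem r_inv (n : ℕ) (m : ZMod n) : (DihedralGroup.r m)⁻¹ = DihedralGroup.r (-m) := rfl

/-- The subgroup `N_{pq²} = {(aˡ, cᵐ)}` of `G_{p,q}`. -/
def NSub (h : Hyp p q i) : Subgroup (Gpq h) where
  carrier := {x | ∃ l : ZMod (p * q), x.left = DihedralGroup.r l}
  one_mem' := ⟨0, rfl⟩
  mul_mem' := by
    rintro x y ⟨lx, hx⟩ ⟨ly, hy⟩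
    refine ⟨lx + (h.unit ^ (toAdd x.right).val : (ZMod (p * q))ˣ) * ly, ?_⟩
    rw [SemidirectProduct.mul_left, hx, hy, h.phiG_r, DihedralGroup.r_mul_r]
  inv_mem' := by
    rintro x ⟨lx, hx⟩
    refine ⟨-((h.unit ^ (toAdd x.right⁻¹).val : (ZMod (p * q))ˣ) * lx), ?_⟩
    rw [SemidirectProduct.inv_left, hx, r_inv, h.phiG_r]
    congr 1
    ring

/-- The subgroup `N_{2pq} = {(bᵉaˡ, 1)} ≅ D_{2pq}` of `G_{p,q}`. -/
def N2pqSub (h : Hyp p q i) : Subgroup (Gpq h) :=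
  MonoidHom.ker SemidirectProduct.rightHom

/-- The subgroup `N¹_{pq} = {(aˡ, 1)}` of `G_{p,q}`. -/
def NpqOneSub (h : Hyp p q i) : Subgroup (Gpq h) where
  carrier := {x | x.right = 1 ∧ ∃ l : ZMod (p * q), x.left = DihedralGroup.r l}
  one_mem' := ⟨rfl, 0, rfl⟩
  mul_mem' := by
    rintro x y ⟨hx1, lx, hx⟩ ⟨hy1, ly, hy⟩
    refine ⟨by rw [SemidirectProduct.mul_right, hx1, hy1, mul_one],
      lx + (h.unit ^ (toAdd x.right).val : (ZMod (p * q))ˣ) * ly, ?_⟩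
    rw [SemidirectProduct.mul_left, hx, hy, h.phiG_r, DihedralGroup.r_mul_r]
  inv_mem' := by
    rintro x ⟨hx1, lx, hx⟩
    refine ⟨by rw [SemidirectProduct.inv_right, hx1, inv_one],
      -((h.unit ^ (toAdd x.right⁻¹).val : (ZMod (p * q))ˣ) * lx), ?_⟩
    rw [SemidirectProduct.inv_left, hx, r_inv, h.phiG_r]
    congr 1
    ring

/-- The subgroup `N²_{pq} = {(a^{qs}, cᵐ)}` of `G_{p,q}`. -/
def NpqTwoSub (h : Hyp p q i) : Subgroup (Gpq h) where
  carrier := {x | ∃ s : ZMod (p * q), x.left = DihedralGroup.r ((q : ZMod (p * q)) * s)}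
  one_mem' := ⟨0, by rw [mul_zero]; rfl⟩
  mul_mem' := by
    rintro x y ⟨sx, hx⟩ ⟨sy, hy⟩
    refine ⟨sx + (h.unit ^ (toAdd x.right).val : (ZMod (p * q))ˣ) * sy, ?_⟩
    rw [SemidirectProduct.mul_left, hx, hy, h.phiG_r, DihedralGroup.r_mul_r]
    congr 1
    ring
  inv_mem' := by
    rintro x ⟨sx, hx⟩
    refine ⟨-((h.unit ^ (toAdd x.right⁻¹).val : (ZMod (p * q))ˣ) * sx), ?_⟩
    rw [SemidirectProduct.inv_left, hx, r_inv, h.phiG_r]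
    congr 1
    ring

/-- The subgroup `N_p = {(a^{qs}, 1)}` of `G_{p,q}`. -/
def NpSub (h : Hyp p q i) : Subgroup (Gpq h) where
  carrier := {x | x.right = 1 ∧ ∃ s : ZMod (p * q), x.left = DihedralGroup.r ((q : ZMod (p * q)) * s)}
  one_mem' := ⟨rfl, 0, by rw [mul_zero]; rfl⟩
  mul_mem' := by
    rintro x y ⟨hx1, sx, hx⟩ ⟨hy1, sy, hy⟩
    refine ⟨by rw [SemidirectProduct.mul_right, hx1, hy1, mul_one],
      sx + (h.unit ^ (toAdd x.right).val : (ZMod (p * q))ˣ) * sy, ?_⟩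
    rw [SemidirectProduct.mul_left, hx, hy, h.phiG_r, DihedralGroup.r_mul_r]
    congr 1
    ring
  inv_mem' := by
    rintro x ⟨hx1, sx, hx⟩
    refine ⟨by rw [SemidirectProduct.inv_right, hx1, inv_one],
      -((h.unit ^ (toAdd x.right⁻¹).val : (ZMod (p * q))ˣ) * sx), ?_⟩
    rw [SemidirectProduct.inv_left, hx, r_inv, h.phiG_r]
    congr 1
    ring

/-- The subgroup `N_q = {(a^{ps}, 1)}` of `G_{p,q}`. -/
def NqSub (h : Hyp p q i) : Subgroup (Gpq h) where
  carrier := {x | x.right = 1 ∧ ∃ s : ZMod (p * q), x.left = DihedralGroup.r ((p : ZMod (p * q)) * s)}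
  one_mem' := ⟨rfl, 0, by rw [mul_zero]; rfl⟩
  mul_mem' := by
    rintro x y ⟨hx1, sx, hx⟩ ⟨hy1, sy, hy⟩
    refine ⟨by rw [SemidirectProduct.mul_right, hx1, hy1, mul_one],
      sx + (h.unit ^ (toAdd x.right).val : (ZMod (p * q))ˣ) * sy, ?_⟩
    rw [SemidirectProduct.mul_left, hx, hy, h.phiG_r, DihedralGroup.r_mul_r]
    congr 1
    ring
  inv_mem' := by
    rintro x ⟨hx1, sx, hx⟩
    refine ⟨by rw [SemidirectProduct.inv_right, hx1, inv_one],
      -((h.unit ^ (toAdd x.right⁻¹).val : (ZMod (p * q))ˣ) * sx), ?_⟩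
    rw [SemidirectProduct.inv_left, hx, r_inv, h.phiG_r]
    congr 1
    ring

end Mizerka

/-!
Let `a`, `c` generate `N_{pq²}`: `a` has order `pq`, `c` has order `q` and `c a c⁻¹ = a^i`.
If a normal subgroup `M` has index prime to `n`, every `g` with `gⁿ = 1` lies in `M`, since
also `g ^ index ∈ M`. When the index is a power of `q`, this puts `a^q` (of order `p`) in `M`.
When it is prime to `q`, it puts `c` and `a^p` in `M`; then `a^{i-1} = c (a c⁻¹ a⁻¹) ∈ M`, and
`p ∤ i - 1` because `i` has order `q ≠ 1` modulo `p`, so `a ∈ M` and `M` is everything.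
-/

namespace Subgroup

variable {G : Type*} [Group G]

theorem mem_of_zpow_mem_of_isCoprime (H : Subgroup G) {g : G} {m n : ℤ} (hmn : IsCoprime m n)
    (hm : g ^ m ∈ H) (hn : g ^ n ∈ H) : g ∈ H := by
  obtain ⟨u, v, huv⟩ := hmn
  have hg : g = (g ^ m) ^ u * (g ^ n) ^ v := by
    rw [← zpow_mul, ← zpow_mul, ← zpow_add, mul_comm m, mul_comm n, huv, zpow_one]
  rw [hg]
  exact mul_mem (zpow_mem hm u) (zpow_mem hn v)

theorem mem_of_pow_eq_one_of_coprime_index (M : Subgroup G) [M.Normal] {g : G} {n : ℕ}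
    (hg : g ^ n = 1) (hn : M.index.Coprime n) : g ∈ M :=
  M.mem_of_zpow_mem_of_isCoprime (Nat.isCoprime_iff_coprime.mpr hn)
    (by simpa only [zpow_natCast] using M.pow_index_mem g)
    (by simpa only [zpow_natCast, hg] using M.one_mem)

theorem normal_of_conj_mem_of_closure_eq_top (H : Subgroup G) [Finite H] {S : Set G}
    (hS : closure S = ⊤) (hconj : ∀ s ∈ S, ∀ x ∈ H, s * x * s⁻¹ ∈ H) : H.Normal := by
  rw [← normalizer_eq_top_iff, eq_top_iff, ← hS, closure_le]
  exact fun s hs => mem_normalizer_fintype (hconj s hs)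

end Subgroup

namespace Mizerka

open SemidirectProduct

variable {p q i : ℕ} (h : Hyp p q i)

theorem Hyp.p_ne_q (h : Hyp p q i) : p ≠ q :=
  ((Nat.le_of_dvd (Nat.sub_pos_of_lt h.hp.one_lt) h.hdvd).trans_lt
    (Nat.sub_lt h.hp.pos one_pos)).ne'

theorem Hyp.isCoprime_sub_one (h : Hyp p q i) : IsCoprime (p : ℤ) ((i : ℤ) - 1) := by
  rw [(Nat.prime_iff_prime_int.mp h.hp).irreducible.coprime_iff_not_dvd,
    ← ZMod.intCast_zmod_eq_zero_iff_dvd]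
  intro hi
  push_cast at hi
  have hq := h.hord
  rw [sub_eq_zero.mp hi, orderOf_one] at hq
  exact h.hq.one_lt.ne hq

theorem Hyp.phiN_apply (z : Multiplicative (ZMod q)) (x : Multiplicative (ZMod (p * q))) :
    h.phiN z x
      = ofAdd (((h.unit ^ (toAdd z).val : (ZMod (p * q))ˣ) : ZMod (p * q)) * toAdd x) := by
  show ((zmodMulAut (p * q) h.unit) ^ (toAdd z).val) x = _
  rw [← map_pow]
  rfl

theorem aN_pow (m : ℕ) : aN h ^ m = inl (ofAdd (m : ZMod (p * q))) := by
  rw [aN, ← map_pow, ← ofAdd_nsmul, Nat.smul_one_eq_cast]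

theorem cN_pow (m : ℕ) : cN h ^ m = inr (ofAdd (m : ZMod q)) := by
  rw [cN, ← map_pow, ← ofAdd_nsmul, Nat.smul_one_eq_cast]

theorem orderOf_aN : orderOf (aN h) = p * q := by
  rw [aN, orderOf_injective inl inl_injective, orderOf_ofAdd_eq_addOrderOf, ZMod.addOrderOf_one]

theorem orderOf_cN : orderOf (cN h) = q := by
  rw [cN, orderOf_injective inr inr_injective, orderOf_ofAdd_eq_addOrderOf, ZMod.addOrderOf_one]

theorem aN_pow_p_mul_q : aN h ^ (p * q) = 1 :=
  orderOf_dvd_iff_pow_eq_one.mp (orderOf_aN h).dvd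

theorem cN_pow_q : cN h ^ q = 1 :=
  orderOf_dvd_iff_pow_eq_one.mp (orderOf_cN h).dvd

theorem orderOf_aN_pow_q : orderOf (aN h ^ q) = p := by
  rw [orderOf_pow' _ h.hq.ne_zero, orderOf_aN, Nat.gcd_eq_right (dvd_mul_left q p),
    Nat.mul_div_cancel _ h.hq.pos]

theorem cN_mul_aN_mul_inv : cN h * aN h * (cN h)⁻¹ = aN h ^ i := by
  have hval : (toAdd (ofAdd (1 : ZMod q))).val = 1 := by
    rw [toAdd_ofAdd, ZMod.val_one_eq_one_mod, Nat.mod_eq_of_lt h.hq.one_lt]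
  rw [cN, aN, ← map_inv, ← inl_aut, h.phiN_apply, hval, pow_one, toAdd_ofAdd, mul_one, ← map_pow,
    ← ofAdd_nsmul, nsmul_one, Hyp.unit, ZMod.coe_unitOfCoprime]

theorem closure_aN_cN : Subgroup.closure {aN h, cN h} = ⊤ := by
  have : NeZero (p * q) := ⟨Nat.mul_ne_zero h.hp.ne_zero h.hq.ne_zero⟩
  have : NeZero q := ⟨h.hq.ne_zero⟩
  refine eq_top_iff.mpr fun x _ => ?_
  have hx : aN h ^ (toAdd x.left).val * cN h ^ (toAdd x.right).val = x := by
    rw [aN_pow, cN_pow, ZMod.natCast_zmod_val, ZMod.natCast_zmod_val, ofAdd_toAdd, ofAdd_toAdd,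
      inl_left_mul_inr_right]
  rw [← hx]
  exact mul_mem (pow_mem (Subgroup.subset_closure (by simp)) _)
    (pow_mem (Subgroup.subset_closure (by simp)) _)

theorem card_Npq2 : Nat.card (Npq2 h) = p * q * q := by
  have e : Npq2 h ≃ ZMod (p * q) × ZMod q :=
    ⟨fun x => (toAdd x.left, toAdd x.right), fun y => ⟨ofAdd y.1, ofAdd y.2⟩,
      fun _ => rfl, fun _ => rfl⟩
  rw [Nat.card_congr e, Nat.card_prod, Nat.card_zmod, Nat.card_zmod]

theorem card_zpowers_aN_pow_q : Nat.card (Subgroup.zpowers (aN h ^ q)) = p := by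
  rw [Nat.card_zpowers, orderOf_aN_pow_q]

theorem index_zpowers_aN_pow_q : (Subgroup.zpowers (aN h ^ q)).index = q ^ 2 := by
  have hcard := (Subgroup.zpowers (aN h ^ q)).card_mul_index
  rw [card_zpowers_aN_pow_q, card_Npq2, mul_assoc] at hcard
  rw [sq]
  exact Nat.eq_of_mul_eq_mul_left h.hp.pos hcard

theorem zpowers_aN_pow_q_normal : (Subgroup.zpowers (aN h ^ q)).Normal := by
  have : Finite (Subgroup.zpowers (aN h ^ q)) :=
    Nat.finite_of_card_ne_zero (by rw [card_zpowers_aN_pow_q]; exact h.hp.ne_zero)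
  refine Subgroup.normal_of_conj_mem_of_closure_eq_top _ (closure_aN_cN h) ?_
  rintro s hs - ⟨k, rfl⟩
  rcases hs with rfl | rfl
  · rw [(((Commute.refl (aN h)).pow_right q).zpow_right k).eq, mul_inv_cancel_right]
    exact zpow_mem (Subgroup.mem_zpowers _) k
  · rw [← conj_zpow, ← conj_pow, cN_mul_aN_mul_inv, pow_right_comm]
    exact zpow_mem (pow_mem (Subgroup.mem_zpowers _) i) k

theorem zpowers_aN_pow_q_le_of_oQuot {M : Subgroup (Npq2 h)} (hM : OQuot q M) :
    Subgroup.zpowers (aN h ^ q) ≤ M := by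
  obtain ⟨hMn, k, hk⟩ := hM
  rw [Subgroup.zpowers_le]
  refine M.mem_of_pow_eq_one_of_coprime_index (n := p) ?_ ?_
  · rw [← pow_mul, Nat.mul_comm q p, aN_pow_p_mul_q]
  · rw [hk]
    exact Nat.Coprime.pow_left _ ((Nat.coprime_primes h.hq h.hp).mpr h.p_ne_q.symm)

theorem eq_top_of_coprime_index {M : Subgroup (Npq2 h)} [M.Normal] (hM : M.index.Coprime q) :
    M = ⊤ := by
  have hc : cN h ∈ M := M.mem_of_pow_eq_one_of_coprime_index (cN_pow_q h) hM
  have hap : (aN h) ^ (p : ℤ) ∈ M := by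
    rw [zpow_natCast]
    refine M.mem_of_pow_eq_one_of_coprime_index ?_ hM
    rw [← pow_mul, aN_pow_p_mul_q]
  have hai : (aN h) ^ ((i : ℤ) - 1) ∈ M := by
    rw [zpow_sub_one, zpow_natCast, ← cN_mul_aN_mul_inv]
    simpa only [mul_assoc] using mul_mem hc (‹M.Normal›.conj_mem _ (inv_mem hc) (aN h))
  have ha : aN h ∈ M := M.mem_of_zpow_mem_of_isCoprime h.isCoprime_sub_one hap hai
  rw [eq_top_iff, ← closure_aN_cN h, Subgroup.closure_le]
  rintro x (rfl | rfl)
  exacts [ha, hc]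

theorem eq_top_of_oQuot {ℓ : ℕ} (hℓ : ℓ.Prime) (hℓq : ℓ ≠ q) {M : Subgroup (Npq2 h)}
    (hM : OQuot ℓ M) : M = ⊤ := by
  obtain ⟨hMn, k, hk⟩ := hM
  refine eq_top_of_coprime_index h ?_
  rw [hk]
  exact Nat.Coprime.pow_left _ ((Nat.coprime_primes hℓ h.hq).mpr hℓq)

end Mizerka

open Mizerka in
/-- With `N_p = ⟨a^q⟩ ≤ N_{pq²}` (a normal subgroup of order `p`):
`O^q(N_{pq²}) = N_p`, `O^p(N_{pq²}) = N_{pq²}`, and every large subgroup of `N_{pq²}`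
contains `N_p`. -/
theorem statement_2 {p q i : ℕ} (h : Hyp p q i) :
    let Np : Subgroup (Npq2 h) := Subgroup.zpowers ((aN h) ^ q)
    Np.Normal ∧ Nat.card Np = p ∧
    OQuot q Np ∧ (∀ M : Subgroup (Npq2 h), OQuot q M → Np ≤ M) ∧
    (∀ M : Subgroup (Npq2 h), OQuot p M → M = ⊤) ∧
    (∀ H : Subgroup (Npq2 h), IsLarge H → Np ≤ H) := by
  intro Np
  have hNp : OQuot q Np := ⟨zpowers_aN_pow_q_normal h, 2, index_zpowers_aN_pow_q h⟩
  refine ⟨hNp.1, card_zpowers_aN_pow_q h, hNp, fun M => zpowers_aN_pow_q_le_of_oQuot h,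
    fun M => eq_top_of_oQuot h h.hp h.p_ne_q, ?_⟩
  rintro H ⟨ℓ, hℓ, N, hN, -, hNH⟩
  rcases eq_or_ne ℓ q with rfl | hℓq
  · exact (zpowers_aN_pow_q_le_of_oQuot h hN).trans hNH
  · rw [eq_top_of_oQuot h hℓ hℓq hN] at hNH
    exact le_top.trans hNH
end

section
/- For any integers l₀ ∈ {0,…,pq−1} and m₀ ∈ {0,…,q−1}, the conjugacy class of g = (b a^{l₀}, c^{m₀}) in G_{p,q} equals {(b a^l, c^{m₀}) : 0 ≤ l ≤ pq−1}, and thus has exactly pq elements. Moreover, g has order 2q if m₀ ≠ 0, and order 2 if m₀ = 0. -/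
open Multiplicative

namespace Mizerka

variable {p q i : ℕ}

/-! Conjugating `(b aˡ, cᵐ)` by `a^t` gives `(b a^{l - (1 + iᵐ) t}, cᵐ)`, and `1 + iᵐ` is a unit
of `ZMod (pq)`: it divides `1 + i^{mq} = 2` because `q` is odd, and `2` is invertible because
`pq` is odd. Hence the class of `(b aˡ, cᵐ)` is all of `{(b aˡ', cᵐ)}`. It contains `(b, cᵐ)`,
a product of the commuting elements `b` (since `τ b = b`) and `cᵐ` of coprime orders `2` and
`ord cᵐ`. -/

theorem _root_.IsConj.orderOf_eq {G : Type*} [Group G] {a b : G} (hab : IsConj a b) :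
    orderOf a = orderOf b := by
  obtain ⟨c, rfl⟩ := isConj_iff.mp hab
  exact ((MulAut.conj c).orderOf_eq a).symm

theorem isUnit_one_add_of_pow_eq_one {R : Type*} [CommRing R] {x : R} {n : ℕ} (hn : Odd n)
    (hx : x ^ n = 1) (h2 : IsUnit (2 : R)) : IsUnit (1 + x) :=
  isUnit_of_dvd_unit (by simpa [hx, one_add_one_eq_two] using hn.add_dvd_pow_add_pow 1 x) h2

namespace Hyp

theorem isUnit_two (h : Hyp p q i) : IsUnit (2 : ZMod (p * q)) := by
  exact_mod_cast (ZMod.isUnit_iff_coprime 2 (p * q)).mpr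
    (Nat.coprime_two_left.mpr (h.hoddp.mul h.hoddq))

theorem isUnit_one_add_unit_pow (h : Hyp p q i) (k : ℕ) :
    IsUnit (1 + ((h.unit ^ k : (ZMod (p * q))ˣ) : ZMod (p * q))) := by
  refine isUnit_one_add_of_pow_eq_one h.hoddq ?_ h.isUnit_two
  rw [← Units.val_pow_eq_pow_val, pow_right_comm, h.unit_pow, one_pow, Units.val_one]

theorem phiG_apply (h : Hyp p q i) (z : Multiplicative (ZMod q)) :
    h.phiG z = dihedralAut (p * q) (h.unit ^ (toAdd z).val) :=
  (map_pow (dihedralAut (p * q)) h.unit _).symm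

@[simp]
theorem phiG_sr (h : Hyp p q i) (z : Multiplicative (ZMod q)) (m : ZMod (p * q)) :
    h.phiG z (DihedralGroup.sr m)
      = DihedralGroup.sr (((h.unit ^ (toAdd z).val : (ZMod (p * q))ˣ) : ZMod (p * q)) * m) := by
  rw [phiG_apply]; rfl

theorem conj_mk (h : Hyp p q i) (y x : DihedralGroup (p * q)) (w z : Multiplicative (ZMod q)) :
    (⟨y, w⟩ : Gpq h) * ⟨x, z⟩ * (⟨y, w⟩ : Gpq h)⁻¹
      = ⟨y * h.phiG w x * h.phiG z y⁻¹, z⟩ := by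
  ext
  · simp only [SemidirectProduct.mul_left, SemidirectProduct.inv_left, SemidirectProduct.mul_right]
    rw [← MulAut.mul_apply, ← map_mul, mul_inv_cancel_comm, mul_assoc]
  · simp [mul_comm]

theorem exists_conj_mk_sr (h : Hyp p q i) (c : Gpq h) (l : ZMod (p * q))
    (z : Multiplicative (ZMod q)) :
    ∃ l', c * ⟨DihedralGroup.sr l, z⟩ * c⁻¹ = (⟨DihedralGroup.sr l', z⟩ : Gpq h) := by
  obtain ⟨y, w⟩ := c
  rw [conj_mk]
  cases y <;> simp [h.phiG_r]

theorem conj_r_mk_sr (h : Hyp p q i) (t l : ZMod (p * q)) (z : Multiplicative (ZMod q)) :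
    (⟨DihedralGroup.r t, 1⟩ : Gpq h) * ⟨DihedralGroup.sr l, z⟩ *
        (⟨DihedralGroup.r t, 1⟩ : Gpq h)⁻¹
      = ⟨DihedralGroup.sr
          (l - (1 + ((h.unit ^ (toAdd z).val : (ZMod (p * q))ˣ) : ZMod (p * q))) * t), z⟩ := by
  rw [conj_mk, map_one, MulAut.one_apply, r_inv, h.phiG_r, DihedralGroup.r_mul_sr,
    DihedralGroup.sr_mul_r]
  congr 2
  ring

theorem isConj_mk_sr_iff (h : Hyp p q i) (l : ZMod (p * q)) (z : Multiplicative (ZMod q))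
    (x : Gpq h) :
    IsConj (⟨DihedralGroup.sr l, z⟩ : Gpq h) x ↔ ∃ l', x = ⟨DihedralGroup.sr l', z⟩ := by
  constructor
  · intro hx
    obtain ⟨c, rfl⟩ := isConj_iff.mp hx
    exact h.exists_conj_mk_sr c l z
  · rintro ⟨l', rfl⟩
    obtain ⟨u, hu⟩ := h.isUnit_one_add_unit_pow (toAdd z).val
    refine isConj_iff.mpr ⟨⟨DihedralGroup.r (↑u⁻¹ * (l - l')), 1⟩, ?_⟩
    rw [conj_r_mk_sr, ← hu, Units.mul_inv_cancel_left, sub_sub_cancel]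

theorem card_setOf_mk_sr (h : Hyp p q i) (z : Multiplicative (ZMod q)) :
    Nat.card {x : Gpq h | ∃ l, x = ⟨DihedralGroup.sr l, z⟩} = p * q := by
  have hinj : Function.Injective fun l : ZMod (p * q) => (⟨DihedralGroup.sr l, z⟩ : Gpq h) :=
    fun l l' hl => DihedralGroup.sr.inj (congrArg SemidirectProduct.left hl)
  have hrange : {x : Gpq h | ∃ l, x = ⟨DihedralGroup.sr l, z⟩}
      = Set.range fun l => ⟨DihedralGroup.sr l, z⟩ := by
    ext x
    simp only [Set.mem_ofPred_eq, Set.mem_range, eq_comm]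
  rw [hrange, Nat.card_range_of_injective hinj, Nat.card_zmod]

theorem orderOf_mk_sr (h : Hyp p q i) (l : ZMod (p * q)) (m : ZMod q) :
    orderOf (⟨DihedralGroup.sr l, ofAdd m⟩ : Gpq h) = 2 * addOrderOf m := by
  have hconj :
      IsConj (⟨DihedralGroup.sr 0, ofAdd m⟩ : Gpq h) ⟨DihedralGroup.sr l, ofAdd m⟩ :=
    (h.isConj_mk_sr_iff 0 _ _).mpr ⟨l, rfl⟩
  have hcomm : Commute (SemidirectProduct.inl (DihedralGroup.sr 0) : Gpq h)
      (SemidirectProduct.inr (ofAdd m)) := by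
    ext <;> simp
  have hb : orderOf (SemidirectProduct.inl (DihedralGroup.sr 0) : Gpq h) = 2 := by
    rw [orderOf_injective _ SemidirectProduct.inl_injective, DihedralGroup.orderOf_sr]
  have hc : orderOf (SemidirectProduct.inr (ofAdd m) : Gpq h) = addOrderOf m := by
    rw [orderOf_injective _ SemidirectProduct.inr_injective, orderOf_ofAdd_eq_addOrderOf]
  have hcop : Nat.Coprime 2 (addOrderOf m) :=
    Nat.coprime_two_left.mpr <| h.hoddq.of_dvd_nat <|
      (addOrderOf_dvd_natCard m).trans (dvd_of_eq (Nat.card_zmod q))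
  rw [← hconj.orderOf_eq, SemidirectProduct.mk_eq_inl_mul_inr,
    hcomm.orderOf_mul_eq_mul_orderOf_of_coprime (hb ▸ hc ▸ hcop), hb, hc]

end Hyp

end Mizerka

open Mizerka Multiplicative in
/-- The conjugacy class of `g = (b a^{l₀}, c^{m₀})` in `G_{p,q}` equals
`{(b aˡ, c^{m₀}) : 0 ≤ l ≤ pq-1}` and has exactly `pq` elements; `g` has order `2q` if
`m₀ ≠ 0` and order `2` if `m₀ = 0`. -/
theorem statement_8 {p q i : ℕ} (h : Hyp p q i) (l0 : ZMod (p * q)) (m0 : ZMod q) :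
    let g : Gpq h := ⟨DihedralGroup.sr l0, ofAdd m0⟩
    ({x : Gpq h | IsConj g x} =
      {x : Gpq h | ∃ l : ZMod (p * q), x = ⟨DihedralGroup.sr l, ofAdd m0⟩}) ∧
    Nat.card {x : Gpq h | IsConj g x} = p * q ∧
    (m0 ≠ 0 → orderOf g = 2 * q) ∧
    (m0 = 0 → orderOf g = 2) := by
  intro g
  have : Fact q.Prime := ⟨h.hq⟩
  have hclass : {x : Gpq h | IsConj g x} =
      {x : Gpq h | ∃ l : ZMod (p * q), x = ⟨DihedralGroup.sr l, ofAdd m0⟩} :=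
    Set.ext fun x => h.isConj_mk_sr_iff l0 (ofAdd m0) x
  refine ⟨hclass, hclass ▸ h.card_setOf_mk_sr (ofAdd m0), fun hm0 => ?_, fun hm0 => ?_⟩
  · rw [h.orderOf_mk_sr, addOrderOf_eq_prime (p := q) (by simp) hm0]
  · rw [h.orderOf_mk_sr, hm0, addOrderOf_zero]
end

section
/- Neither N_{pq²} nor the dihedral group D_{2pq} has a normal subgroup P of prime power order (including the trivial subgroup) such that the corresponding quotient group is cyclic. -/
open Multiplicative

/-!
A cyclic quotient is abelian, so a normal subgroup `P` with cyclic quotient contains every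
commutator. In `D_{2pq}` the commutator `[a, b] = a²` has order `pq`, so `pq` divides `|P|`.
In `N_{pq²}` the commutator `[c, a] = a^{i-1}` has order `p`, so `p` divides `|P|`; on the
other hand every element of `N_{pq²}` has order dividing `pq`, hence so does the order of the
cyclic quotient, and `|P| = pq² / |N_{pq²} ⧸ P|` is divisible by `q`. In both cases `|P|` has
two distinct prime factors.
-/

open scoped commutatorElement

theorem Nat.not_exists_eq_prime_pow_of_dvd {p q m : ℕ} (hp : p.Prime) (hq : q.Prime)
    (hpq : p ≠ q) (hpm : p ∣ m) (hqm : q ∣ m) : ¬ ∃ ℓ k : ℕ, ℓ.Prime ∧ m = ℓ ^ k := by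
  rintro ⟨ℓ, k, hℓ, rfl⟩
  have hpℓ : p = ℓ := (Nat.prime_dvd_prime_iff_eq hp hℓ).mp (hp.dvd_of_dvd_pow hpm)
  have hqℓ : q = ℓ := (Nat.prime_dvd_prime_iff_eq hq hℓ).mp (hq.dvd_of_dvd_pow hqm)
  exact hpq (hpℓ.trans hqℓ.symm)

theorem ZMod.nsmul_eq_zero_of_castHom_eq_zero {m n : ℕ} {w : ZMod (m * n)}
    (hw : ZMod.castHom (dvd_mul_left n m) (ZMod n) w = 0) : m • w = 0 := by
  obtain ⟨t, rfl⟩ := ZMod.intCast_surjective w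
  rw [map_intCast, ZMod.intCast_zmod_eq_zero_iff_dvd] at hw
  obtain ⟨s, rfl⟩ := hw
  rw [nsmul_eq_mul]
  push_cast
  rw [← mul_assoc, ← Nat.cast_mul, ZMod.natCast_self, zero_mul]

theorem Multiplicative.pow_zmod_eq_one {n : ℕ} (x : Multiplicative (ZMod n)) : x ^ n = 1 := by
  rw [← ofAdd_toAdd x, ← ofAdd_nsmul, nsmul_eq_mul, ZMod.natCast_self, zero_mul, ofAdd_zero]

namespace Subgroup

variable {G : Type*} [Group G] (P : Subgroup G) [P.Normal] [IsCyclic (G ⧸ P)]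

theorem commutatorElement_mem_of_isCyclic_quotient (g g' : G) : ⁅g, g'⁆ ∈ P := by
  rw [← QuotientGroup.eq_one_iff, ← QuotientGroup.mk'_apply, map_commutatorElement,
    commutatorElement_eq_one_iff_mul_comm]
  exact IsCyclic.commGroup.mul_comm _ _

theorem card_quotient_dvd_of_forall_pow_eq_one {n : ℕ} (hn : ∀ g : G, g ^ n = 1) :
    Nat.card (G ⧸ P) ∣ n := by
  rw [← IsCyclic.exponent_eq_card]
  refine Monoid.exponent_dvd_of_forall_pow_eq_one fun y => ?_
  induction y using QuotientGroup.induction_on with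
  | H g => rw [← QuotientGroup.mk_pow, hn, QuotientGroup.mk_one]

end Subgroup

namespace DihedralGroup

theorem commutatorElement_r_sr {n : ℕ} (i j : ZMod n) : ⁅r i, sr j⁆ = r (2 * i) := by
  rw [commutatorElement_def, inv_r, inv_sr, r_mul_sr, sr_mul_r, sr_mul_sr]
  congr 1
  ring

theorem orderOf_r_two {n : ℕ} (hn : Odd n) : orderOf (r 2 : DihedralGroup n) = n := by
  have : NeZero n := ⟨hn.pos.ne'⟩
  have hr : (r 2 : DihedralGroup n) = r 1 ^ 2 := by rw [r_one_pow]; norm_cast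
  rw [hr, Nat.Coprime.orderOf_pow (by rwa [orderOf_r_one, Nat.coprime_two_right]), orderOf_r_one]

theorem dvd_card_of_isCyclic_quotient {n : ℕ} (hn : Odd n) (P : Subgroup (DihedralGroup n))
    [P.Normal] [IsCyclic (DihedralGroup n ⧸ P)] : n ∣ Nat.card P := by
  have hmem := P.commutatorElement_mem_of_isCyclic_quotient (r 1) (sr 0)
  rw [commutatorElement_r_sr, mul_one] at hmem
  exact (orderOf_r_two hn).symm.dvd.trans (P.orderOf_dvd_natCard hmem)

end DihedralGroup

namespace Mizerka.Hyp

variable {p q i : ℕ}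

theorem p_ne_q_s18 (h : Hyp p q i) : p ≠ q := by
  have hle : q ≤ p - 1 := Nat.le_of_dvd (Nat.sub_pos_of_lt h.hp.one_lt) h.hdvd
  have := h.hp.pos
  omega

theorem natCast_eq_one_zmod_q (h : Hyp p q i) : (i : ZMod q) = 1 := by
  simpa using (ZMod.natCast_eq_natCast_iff i 1 q).mpr h.hmod

theorem natCast_ne_one_zmod_p (h : Hyp p q i) : (i : ZMod p) ≠ 1 := by
  intro hi
  have hord := h.hord
  rw [hi, orderOf_one] at hord
  exact h.hq.one_lt.ne hord

theorem phiN_apply_s18 (h : Hyp p q i) (z : Multiplicative (ZMod q))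
    (x : Multiplicative (ZMod (p * q))) :
    h.phiN z x = ofAdd (((h.unit ^ (toAdd z).val : (ZMod (p * q))ˣ) : ZMod (p * q)) * toAdd x) := by
  change (zmodMulAut (p * q) h.unit ^ (toAdd z).val) x = _
  rw [← map_pow]
  rfl

theorem castHom_unit_pow (h : Hyp p q i) (k : ℕ) :
    ZMod.castHom (dvd_mul_left q p) (ZMod q) ((h.unit ^ k : (ZMod (p * q))ˣ) : ZMod (p * q)) = 1 := by
  rw [Units.val_pow_eq_pow_val, map_pow, Hyp.unit, ZMod.coe_unitOfCoprime, map_natCast,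
    h.natCast_eq_one_zmod_q, one_pow]

/-- Reading the exponent of `a` modulo `q`: a homomorphism because `c` acts on `⟨a⟩` by
`a ↦ a^i` with `i ≡ 1 (mod q)`. -/
def reduceModQ (h : Hyp p q i) : Npq2 h →* Multiplicative (ZMod q) :=
  SemidirectProduct.lift (ZMod.castHom (dvd_mul_left q p) (ZMod q)).toAddMonoidHom.toMultiplicative 1
    fun z => MonoidHom.ext fun x => by
      simp only [MonoidHom.comp_apply, MulEquiv.coe_toMonoidHom, MonoidHom.one_apply, map_one,
        MulAut.one_apply]
      change ZMod.castHom (dvd_mul_left q p) (ZMod q) (toAdd (h.phiN z x)) =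
        ZMod.castHom (dvd_mul_left q p) (ZMod q) (toAdd x)
      rw [phiN_apply_s18, toAdd_ofAdd, map_mul, castHom_unit_pow, one_mul]

theorem pow_pq_eq_one (h : Hyp p q i) (g : Npq2 h) : g ^ (p * q) = 1 := by
  obtain ⟨w, hw⟩ : g ^ q ∈ (SemidirectProduct.inl : _ →* Npq2 h).range := by
    rw [SemidirectProduct.range_inl_eq_ker_rightHom, MonoidHom.mem_ker, map_pow,
      Multiplicative.pow_zmod_eq_one]
  have hwq : ZMod.castHom (dvd_mul_left q p) (ZMod q) (toAdd w) = 0 := by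
    have : h.reduceModQ (SemidirectProduct.inl w) = 1 := by
      rw [hw, map_pow, Multiplicative.pow_zmod_eq_one]
    simpa [reduceModQ] using this
  calc g ^ (p * q) = (g ^ q) ^ p := pow_mul' g p q
    _ = SemidirectProduct.inl (w ^ p) := by rw [← hw, map_pow]
    _ = 1 := by
      rw [← ofAdd_toAdd w, ← ofAdd_nsmul, ZMod.nsmul_eq_zero_of_castHom_eq_zero hwq, ofAdd_zero,
        map_one]

theorem card_Npq2 (h : Hyp p q i) : Nat.card (Npq2 h) = p * q * q := by
  rw [SemidirectProduct.card, Nat.card_congr toAdd, Nat.card_congr toAdd, Nat.card_zmod,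
    Nat.card_zmod]

theorem commutatorElement_cN_aN (h : Hyp p q i) :
    ⁅cN h, aN h⁆ = SemidirectProduct.inl (ofAdd ((i : ZMod (p * q)) - 1)) := by
  have : Fact (1 < q) := ⟨h.hq.one_lt⟩
  rw [cN, aN, commutatorElement_def, ← map_inv, ← SemidirectProduct.inl_aut, ← map_inv, ← map_mul,
    phiN_apply_s18, toAdd_ofAdd, ZMod.val_one, pow_one, toAdd_ofAdd, mul_one, Hyp.unit,
    ZMod.coe_unitOfCoprime, ← ofAdd_neg, ← ofAdd_add, sub_eq_add_neg]

theorem orderOf_commutatorElement_cN_aN (h : Hyp p q i) : orderOf ⁅cN h, aN h⁆ = p := by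
  have : Fact p.Prime := ⟨h.hp⟩
  rw [h.commutatorElement_cN_aN, orderOf_injective _ SemidirectProduct.inl_injective,
    orderOf_ofAdd_eq_addOrderOf]
  refine addOrderOf_eq_prime ?_ fun h0 => h.natCast_ne_one_zmod_p ?_
  · apply ZMod.nsmul_eq_zero_of_castHom_eq_zero
    rw [map_sub, map_natCast, map_one, h.natCast_eq_one_zmod_q, sub_self]
  · have := congrArg (ZMod.castHom (dvd_mul_right p q) (ZMod p)) h0
    rwa [map_sub, map_natCast, map_one, map_zero, sub_eq_zero] at this

variable (h : Hyp p q i) (P : Subgroup (Npq2 h)) [P.Normal] [IsCyclic (Npq2 h ⧸ P)]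

theorem p_dvd_card_of_isCyclic_quotient : p ∣ Nat.card P :=
  h.orderOf_commutatorElement_cN_aN.symm.dvd.trans
    (P.orderOf_dvd_natCard (P.commutatorElement_mem_of_isCyclic_quotient _ _))

theorem q_dvd_card_of_isCyclic_quotient : q ∣ Nat.card P := by
  obtain ⟨d, hd⟩ := P.card_quotient_dvd_of_forall_pow_eq_one h.pow_pq_eq_one
  have hcard := P.card_eq_card_quotient_mul_card_subgroup
  have hpos : 0 < Nat.card (Npq2 h ⧸ P) :=
    Nat.pos_of_dvd_of_pos ⟨d, hd⟩ (Nat.mul_pos h.hp.pos h.hq.pos)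
  rw [h.card_Npq2] at hcard
  have : Nat.card (Npq2 h ⧸ P) * (d * q) = Nat.card (Npq2 h ⧸ P) * Nat.card P := by
    rw [← mul_assoc, ← hd, hcard]
  exact ⟨d, by rw [← Nat.eq_of_mul_eq_mul_left hpos this, mul_comm]⟩

end Mizerka.Hyp

open Mizerka in
/-- Neither `N_{pq²}` nor `D_{2pq}` has a normal subgroup of prime power
order (including the trivial subgroup, of order `ℓ⁰ = 1`) with cyclic quotient. -/
theorem statement_18 {p q i : ℕ} (h : Hyp p q i) :
    (∀ P : Subgroup (Npq2 h), ∀ hP : P.Normal,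
      (∃ ℓ k : ℕ, Nat.Prime ℓ ∧ Nat.card P = ℓ ^ k) →
        ¬ (haveI := hP; IsCyclic (Npq2 h ⧸ P))) ∧
    (∀ P : Subgroup (DihedralGroup (p * q)), ∀ hP : P.Normal,
      (∃ ℓ k : ℕ, Nat.Prime ℓ ∧ Nat.card P = ℓ ^ k) →
        ¬ (haveI := hP; IsCyclic (DihedralGroup (p * q) ⧸ P))) := by
  have not_prime_pow {m : ℕ} (hpm : p ∣ m) (hqm : q ∣ m) :=
    Nat.not_exists_eq_prime_pow_of_dvd h.hp h.hq h.p_ne_q_s18 hpm hqm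
  refine ⟨fun P _ hP _ => ?_, fun P _ hP _ => ?_⟩
  · exact not_prime_pow (h.p_dvd_card_of_isCyclic_quotient P)
      (h.q_dvd_card_of_isCyclic_quotient P) hP
  · have hpq := DihedralGroup.dvd_card_of_isCyclic_quotient (h.hoddp.mul h.hoddq) P
    exact not_prime_pow (dvd_of_mul_right_dvd hpq) (dvd_of_mul_left_dvd hpq) hP
end
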